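/- arXiv:math/0005013 — 6 statements merged into one kernel-verified Lean document; each statement's English description precedes it below -/
import Mathlib

section
/- Let K be a compact metric space, U open in K, L closed in K with U ⊆ L ⊆ K, f a real-valued function on K, α a countable ordinal, and ε > 0. Then K^α(f,ε) ∩ U ⊆ L^α(f,ε). -/
open Filter Topology Set Ordinal

noncomputable section

/-- One step of the oscillation derivation of `A` with respect to `f` and `ε`. -/
def oscStep {K : Type*} [TopologicalSpace K] (f : K → ℝ) (ε : ℝ) (A : Set K) : Set K :=
  {x ∈ A | ∀ U : Set K, IsOpen U → x ∈ U →
    ∃ x₁ ∈ U ∩ A, ∃ x₂ ∈ U ∩ A, ε ≤ |f x₁ - f x₂|}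

/-- The transfinite oscillation derivatives `H^α(f, ε)`. -/
def oscDeriv {K : Type*} [TopologicalSpace K] (f : K → ℝ) (ε : ℝ) (H : Set K) :
    Ordinal → Set K := fun α =>
  Ordinal.limitRecOn α H (fun _ ih => oscStep f ε ih)
    (fun _ _ ih => ⋂ (β : Ordinal) (h : _), ih β h)

/-- One step of the convergence derivation of `A` for a sequence `f`. -/
def seqStep {K : Type*} [TopologicalSpace K] (f : ℕ → K → ℝ) (ε : ℝ) (A : Set K) : Set K :=
  {x ∈ A | ∀ U : Set K, IsOpen U → x ∈ U → ∀ m : ℕ,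
    ∃ n₁ n₂ : ℕ, m < n₂ ∧ n₂ < n₁ ∧ ∃ x' ∈ U ∩ A, ε ≤ |f n₁ x' - f n₂ x'|}

/-- The transfinite convergence derivatives `H^α((fₙ), ε)`. -/
def seqDeriv {K : Type*} [TopologicalSpace K] (f : ℕ → K → ℝ) (ε : ℝ) (H : Set K) :
    Ordinal → Set K := fun α =>
  Ordinal.limitRecOn α H (fun _ ih => seqStep f ε ih)
    (fun _ _ ih => ⋂ (β : Ordinal) (h : _), ih β h)

open Classical in
/-- The least ordinal at which the family `S` is empty, and `ω₁` if there is none. -/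
def emptyIndex {K : Type*} (S : Ordinal → Set K) : Ordinal :=
  if _ : ∃ α, S α = ∅ then sInf {α | S α = ∅} else (Cardinal.aleph 1).ord

/-- The oscillation index `β_H(f, ε)`. -/
def betaEpsOn {K : Type*} [TopologicalSpace K] (f : K → ℝ) (ε : ℝ) (H : Set K) : Ordinal :=
  emptyIndex (oscDeriv f ε H)

/-- The oscillation index `β_H(f)`. -/
def betaOn {K : Type*} [TopologicalSpace K] (f : K → ℝ) (H : Set K) : Ordinal :=
  ⨆ ε : {e : ℝ // 0 < e}, betaEpsOn f ε.1 H

/-- The oscillation index `β(f)` over the whole space. -/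
def beta {K : Type*} [TopologicalSpace K] (f : K → ℝ) : Ordinal :=
  betaOn f Set.univ

/-- The convergence index `γ_H((fₙ), ε)`. -/
def gammaEpsOn {K : Type*} [TopologicalSpace K] (f : ℕ → K → ℝ) (ε : ℝ) (H : Set K) : Ordinal :=
  emptyIndex (seqDeriv f ε H)

/-- The convergence index `γ_H((fₙ))`. -/
def gammaOn {K : Type*} [TopologicalSpace K] (f : ℕ → K → ℝ) (H : Set K) : Ordinal :=
  ⨆ ε : {e : ℝ // 0 < e}, gammaEpsOn f ε.1 H

/-- The convergence index `γ((fₙ))` over the whole space. -/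
def gamma {K : Type*} [TopologicalSpace K] (f : ℕ → K → ℝ) : Ordinal :=
  gammaOn f Set.univ

/-- A function is of Baire class one if it is a pointwise limit of continuous functions. -/
def BaireOne {K : Type*} [TopologicalSpace K] (f : K → ℝ) : Prop :=
  ∃ F : ℕ → K → ℝ, (∀ n, Continuous (F n)) ∧
    ∀ x, Tendsto (fun n => F n x) atTop (nhds (f x))

/-- `f` is of Baire class one on the subspace `F`. -/
def BaireOneOn {K : Type*} [TopologicalSpace K] (f : K → ℝ) (F : Set K) : Prop :=
  ∃ g : ℕ → F → ℝ, (∀ n, Continuous (g n)) ∧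
    ∀ x : F, Tendsto (fun n => g n x) atTop (nhds (f x))

/-- `g` is a convex block combination of `f`. -/
def ConvexBlockOf {K : Type*} (g f : ℕ → K → ℝ) : Prop :=
  ∃ a : ℕ → ℝ, ∃ p : ℕ → ℕ, (∀ k, 0 ≤ a k) ∧ StrictMono p ∧ p 0 = 0 ∧
    (∀ n, ∑ k ∈ Finset.Ioc (p n) (p (n + 1)), a k = 1) ∧
    ∀ n x, g n x = ∑ k ∈ Finset.Ioc (p n) (p (n + 1)), a k * f k x

end

theorem statement0 {K : Type*} [MetricSpace K] [CompactSpace K]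
    (U L : Set K) (hU : IsOpen U) (hL : IsClosed L) (hUL : U ⊆ L)
    (f : K → ℝ) (α : Ordinal) (hα : α < (Cardinal.aleph 1).ord) (ε : ℝ) (hε : 0 < ε) :
    oscDeriv f ε Set.univ α ∩ U ⊆ oscDeriv f ε L α := by
  clear hα
  induction α using Ordinal.limitRecOn with
  | zero =>
    simp only [oscDeriv, Ordinal.limitRecOn_zero]
    exact fun x hx => hUL hx.2
  | add_one β ih =>
    simp only [oscDeriv, Ordinal.limitRecOn_add_one] at *
    rintro x ⟨⟨hxA, hx⟩, hxU⟩
    refine ⟨ih ⟨hxA, hxU⟩, fun V hV hxV => ?_⟩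
    obtain ⟨x₁, hx₁, x₂, hx₂, hf⟩ := hx (V ∩ U) (hV.inter hU) ⟨hxV, hxU⟩
    exact ⟨x₁, ⟨hx₁.1.1, ih ⟨hx₁.2, hx₁.1.2⟩⟩, x₂, ⟨hx₂.1.1, ih ⟨hx₂.2, hx₂.1.2⟩⟩, hf⟩
  | limit β hβ ih =>
    simp only [oscDeriv, Ordinal.limitRecOn_limit _ _ _ _ hβ] at *
    rintro x ⟨hx, hxU⟩
    simp only [Set.mem_iInter] at hx ⊢
    exact fun γ hγ => ih γ hγ ⟨hx γ hγ, hxU⟩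
end

section
/- Let K be a compact metric space, (fₙ) a sequence of real-valued functions converging pointwise to f, and ε > 0. Suppose there exists m such that ‖f − fₘ‖_∞ ≤ ε. Then K^α(f, 3ε) ⊆ K^α(fₘ, ε) for every countable ordinal α. -/
open Filter Topology Set Ordinal

theorem statement3 {K : Type*} [MetricSpace K] [CompactSpace K]
    (F : ℕ → K → ℝ) (f : K → ℝ)
    (hconv : ∀ x, Tendsto (fun n => F n x) atTop (nhds (f x)))
    (ε : ℝ) (hε : 0 < ε) (m : ℕ) (hm : ∀ x, |f x - F m x| ≤ ε) :
    ∀ α : Ordinal, α < (Cardinal.aleph 1).ord →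
      oscDeriv f (3 * ε) Set.univ α ⊆ oscDeriv (F m) ε Set.univ α := by
  suffices h : ∀ α : Ordinal, oscDeriv f (3 * ε) Set.univ α ⊆ oscDeriv (F m) ε Set.univ α from
    fun α _ => h α
  intro α
  induction α using Ordinal.limitRecOn with
  | zero => simp [oscDeriv, Ordinal.limitRecOn_zero]
  | add_one α ih =>
    rw [show oscDeriv f (3 * ε) Set.univ (α + 1)
        = oscStep f (3 * ε) (oscDeriv f (3 * ε) Set.univ α) from
      Ordinal.limitRecOn_add_one _ _ _ _,
      show oscDeriv (F m) ε Set.univ (α + 1)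
        = oscStep (F m) ε (oscDeriv (F m) ε Set.univ α) from
      Ordinal.limitRecOn_add_one _ _ _ _]
    rintro x ⟨hxA, hx⟩
    refine ⟨ih hxA, fun U hU hxU => ?_⟩
    obtain ⟨x₁, hx₁, x₂, hx₂, h⟩ := hx U hU hxU
    refine ⟨x₁, ⟨hx₁.1, ih hx₁.2⟩, x₂, ⟨hx₂.1, ih hx₂.2⟩, ?_⟩
    have h1 := hm x₁
    have h2 := hm x₂
    have ha := abs_sub_abs_le_abs_sub (f x₁ - f x₂) (F m x₁ - F m x₂)
    have hb : |f x₁ - f x₂ - (F m x₁ - F m x₂)| ≤ |f x₁ - F m x₁| + |f x₂ - F m x₂| := by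
      have : f x₁ - f x₂ - (F m x₁ - F m x₂) = (f x₁ - F m x₁) - (f x₂ - F m x₂) := by ring
      rw [this]
      exact (abs_sub _ _)
    linarith
  | limit α hα ih =>
    rw [show oscDeriv f (3 * ε) Set.univ α = ⋂ β, ⋂ (h : β < α), oscDeriv f (3 * ε) Set.univ β
        from Ordinal.limitRecOn_limit _ _ _ _ hα,
      show oscDeriv (F m) ε Set.univ α = ⋂ β, ⋂ (h : β < α), oscDeriv (F m) ε Set.univ β
        from Ordinal.limitRecOn_limit _ _ _ _ hα]
    exact Set.iInter₂_mono fun β hβ => ih β hβ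
end

section
/- Let K be a compact metric space and (fₙ) a sequence of Baire class one functions on K converging pointwise to f. Suppose ε > 0, β(fₙ,ε) ≤ β₀ for all n, and γ((fₙ),ε) ≤ γ₀, where β₀, γ₀ are countable ordinals. Then β(f,3ε) ≤ β₀·γ₀. -/
open Filter Topology Set Ordinal

section AuxLemmas
variable {K : Type*} [TopologicalSpace K]

theorem oscDeriv_zero' (f : K → ℝ) (ε : ℝ) (H : Set K) : oscDeriv f ε H 0 = H :=
  Ordinal.limitRecOn_zero _ _ _

theorem oscDeriv_succ' (f : K → ℝ) (ε : ℝ) (H : Set K) (α : Ordinal) :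
    oscDeriv f ε H (Order.succ α) = oscStep f ε (oscDeriv f ε H α) :=
  Ordinal.limitRecOn_succ _ _ _ _

theorem oscDeriv_limit' (f : K → ℝ) (ε : ℝ) (H : Set K) {α : Ordinal} (h : Order.IsSuccLimit α) :
    oscDeriv f ε H α = ⋂ (β : Ordinal) (_ : β < α), oscDeriv f ε H β :=
  Ordinal.limitRecOn_limit _ _ _ _ h

theorem seqDeriv_zero' (f : ℕ → K → ℝ) (ε : ℝ) (H : Set K) : seqDeriv f ε H 0 = H :=
  Ordinal.limitRecOn_zero _ _ _

theorem seqDeriv_succ' (f : ℕ → K → ℝ) (ε : ℝ) (H : Set K) (α : Ordinal) :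
    seqDeriv f ε H (Order.succ α) = seqStep f ε (seqDeriv f ε H α) :=
  Ordinal.limitRecOn_succ _ _ _ _

theorem seqDeriv_limit' (f : ℕ → K → ℝ) (ε : ℝ) (H : Set K) {α : Ordinal} (h : Order.IsSuccLimit α) :
    seqDeriv f ε H α = ⋂ (β : Ordinal) (_ : β < α), seqDeriv f ε H β :=
  Ordinal.limitRecOn_limit _ _ _ _ h

theorem oscDeriv_antitone' (f : K → ℝ) (ε : ℝ) (H : Set K) :
    ∀ {α β : Ordinal}, β ≤ α → oscDeriv f ε H α ⊆ oscDeriv f ε H β := by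
  intro α
  induction α using Ordinal.limitRecOn with
  | zero => intro β hβ; rw [nonpos_iff_eq_zero.mp hβ]
  | add_one α ih =>
    rw [Ordinal.add_one_eq_succ]
    intro β hβ
    rcases hβ.lt_or_eq with h | h
    · refine subset_trans ?_ (ih (Order.lt_succ_iff.mp h))
      rw [oscDeriv_succ']
      exact fun x hx => hx.1
    · rw [h]
  | limit α hα ih =>
    intro β hβ
    rcases hβ.lt_or_eq with h | h
    · intro x hx
      rw [oscDeriv_limit' f ε H hα] at hx
      simp only [Set.mem_iInter] at hx
      exact hx β h
    · rw [h]

theorem seqDeriv_antitone' (f : ℕ → K → ℝ) (ε : ℝ) (H : Set K) :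
    ∀ {α β : Ordinal}, β ≤ α → seqDeriv f ε H α ⊆ seqDeriv f ε H β := by
  intro α
  induction α using Ordinal.limitRecOn with
  | zero => intro β hβ; rw [nonpos_iff_eq_zero.mp hβ]
  | add_one α ih =>
    rw [Ordinal.add_one_eq_succ]
    intro β hβ
    rcases hβ.lt_or_eq with h | h
    · refine subset_trans ?_ (ih (Order.lt_succ_iff.mp h))
      rw [seqDeriv_succ']
      exact fun x hx => hx.1
    · rw [h]
  | limit α hα ih =>
    intro β hβ
    rcases hβ.lt_or_eq with h | h
    · intro x hx
      rw [seqDeriv_limit' f ε H hα] at hx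
      simp only [Set.mem_iInter] at hx
      exact hx β h
    · rw [h]

theorem deriv_empty_of_emptyIndex_le {K : Type*} {S : Ordinal → Set K}
    (hanti : ∀ {a b : Ordinal}, a ≤ b → S b ⊆ S a) {b : Ordinal}
    (hb : emptyIndex S ≤ b) (hb' : b < (Cardinal.aleph 1).ord) : S b = ∅ := by
  unfold emptyIndex at hb
  split_ifs at hb with h
  · have hne : {α | S α = ∅}.Nonempty := h
    have hmem : S (sInf {α | S α = ∅}) = ∅ := csInf_mem hne
    exact Set.eq_empty_of_subset_empty ((hanti hb).trans hmem.subset)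
  · exact absurd hb (not_le.mpr hb')

theorem emptyIndex_le_of_empty {K : Type*} {S : Ordinal → Set K} {b : Ordinal}
    (hb : S b = ∅) : emptyIndex S ≤ b := by
  unfold emptyIndex
  rw [dif_pos ⟨b, hb⟩]
  exact csInf_le' hb

theorem inner_claim {K : Type*} [TopologicalSpace K] (f g : K → ℝ) (ε : ℝ)
    (δ : Ordinal) (U : Set K) (hUo : IsOpen U)
    (happrox : ∀ x ∈ U ∩ oscDeriv f (3 * ε) Set.univ δ, |f x - g x| ≤ ε) :
    ∀ β : Ordinal, oscDeriv f (3 * ε) Set.univ (δ + β) ∩ U ⊆ oscDeriv g ε Set.univ β := by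
  intro β
  induction β using Ordinal.limitRecOn with
  | zero =>
    rw [oscDeriv_zero']
    exact fun x _ => Set.mem_univ x
  | add_one β ih =>
    rw [Ordinal.add_one_eq_succ]
    intro y hy
    obtain ⟨hy1, hyU⟩ := hy
    rw [Ordinal.add_succ, oscDeriv_succ'] at hy1
    rw [oscDeriv_succ']
    obtain ⟨hy2, hosc⟩ := hy1
    refine ⟨ih ⟨hy2, hyU⟩, ?_⟩
    intro V hVo hyV
    obtain ⟨x₁, hx₁, x₂, hx₂, hf⟩ := hosc (V ∩ U) (hVo.inter hUo) ⟨hyV, hyU⟩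
    have m₁ : x₁ ∈ oscDeriv g ε Set.univ β := ih ⟨hx₁.2, hx₁.1.2⟩
    have m₂ : x₂ ∈ oscDeriv g ε Set.univ β := ih ⟨hx₂.2, hx₂.1.2⟩
    have a₁ : |f x₁ - g x₁| ≤ ε :=
      happrox x₁ ⟨hx₁.1.2, oscDeriv_antitone' _ _ _ le_self_add hx₁.2⟩
    have a₂ : |f x₂ - g x₂| ≤ ε :=
      happrox x₂ ⟨hx₂.1.2, oscDeriv_antitone' _ _ _ le_self_add hx₂.2⟩
    refine ⟨x₁, ⟨hx₁.1.1, m₁⟩, x₂, ⟨hx₂.1.1, m₂⟩, ?_⟩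
    have key : |f x₁ - f x₂| ≤ |f x₁ - g x₁| + |g x₁ - g x₂| + |g x₂ - f x₂| := by
      have h1 : f x₁ - f x₂ = (f x₁ - g x₁) + (g x₁ - g x₂) + (g x₂ - f x₂) := by ring
      rw [h1]
      exact (abs_add_le _ _).trans (by gcongr; exact abs_add_le _ _)
    have a₂' : |g x₂ - f x₂| ≤ ε := (abs_sub_comm (g x₂) (f x₂)) ▸ a₂
    linarith
  | limit β hβlim ih =>
    intro y hy
    obtain ⟨hy1, hyU⟩ := hy
    rw [oscDeriv_limit' _ _ _ hβlim]
    have hlim2 : Order.IsSuccLimit (δ + β) := Ordinal.isSuccLimit_add δ hβlim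
    rw [oscDeriv_limit' _ _ _ hlim2] at hy1
    simp only [Set.mem_iInter] at hy1 ⊢
    intro c hc
    exact ih c hc ⟨hy1 (δ + c) ((add_lt_add_iff_left δ).mpr hc), hyU⟩

end AuxLemmas

theorem statement4 {K : Type*} [MetricSpace K] [CompactSpace K]
    (F : ℕ → K → ℝ) (f : K → ℝ) (hB : ∀ n, BaireOne (F n))
    (hconv : ∀ x, Tendsto (fun n => F n x) atTop (nhds (f x)))
    (ε : ℝ) (hε : 0 < ε) (β₀ γ₀ : Ordinal)
    (hβ₀ : β₀ < (Cardinal.aleph 1).ord) (hγ₀ : γ₀ < (Cardinal.aleph 1).ord)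
    (hβ : ∀ n, betaEpsOn (F n) ε Set.univ ≤ β₀)
    (hγ : gammaEpsOn F ε Set.univ ≤ γ₀) :
    betaEpsOn f (3 * ε) Set.univ ≤ β₀ * γ₀ := by
  by_cases hK : (Set.univ : Set K) = ∅
  · exact le_trans (emptyIndex_le_of_empty (by rw [oscDeriv_zero']; exact hK)) zero_le
  have hβ' : ∀ n, oscDeriv (F n) ε Set.univ β₀ = ∅ := fun n =>
    deriv_empty_of_emptyIndex_le (fun h => oscDeriv_antitone' _ _ _ h) (hβ n) hβ₀
  have hγ' : seqDeriv F ε Set.univ γ₀ = ∅ :=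
    deriv_empty_of_emptyIndex_le (fun h => seqDeriv_antitone' _ _ _ h) hγ hγ₀
  have hβ₀pos : 0 < β₀ := by
    rcases eq_zero_or_pos β₀ with h | h
    · exfalso
      apply hK
      rw [← oscDeriv_zero' (F 0) ε Set.univ, ← h]
      exact hβ' 0
    · exact h
  have main : ∀ α : Ordinal, oscDeriv f (3 * ε) Set.univ (β₀ * α) ⊆ seqDeriv F ε Set.univ α := by
    intro α
    induction α using Ordinal.limitRecOn with
    | zero =>
      rw [mul_zero, oscDeriv_zero', seqDeriv_zero']
    | add_one α ih =>
      rw [Ordinal.add_one_eq_succ]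
      intro x hx
      rw [Ordinal.mul_succ] at hx
      rw [seqDeriv_succ']
      set A := seqDeriv F ε Set.univ α with hAdef
      have hxA : x ∈ A := ih (oscDeriv_antitone' _ _ _ le_self_add hx)
      refine ⟨hxA, ?_⟩
      intro U hUo hxU m
      by_contra hcon
      push_neg at hcon
      set n := m + 1 with hn
      have happrox : ∀ x' ∈ U ∩ oscDeriv f (3 * ε) Set.univ (β₀ * α), |f x' - F n x'| ≤ ε := by
        intro x' hx'
        have hx'UA : x' ∈ U ∩ A := ⟨hx'.1, ih hx'.2⟩
        have hev : ∀ᶠ n₁ in atTop, |F n₁ x' - F n x'| ≤ ε := by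
          filter_upwards [eventually_gt_atTop n] with n₁ hn₁
          exact (hcon n₁ n (Nat.lt_succ_self m) hn₁ x' hx'UA).le
        have hlim : Tendsto (fun n₁ => |F n₁ x' - F n x'|) atTop (nhds (|f x' - F n x'|)) :=
          ((hconv x').sub tendsto_const_nhds).abs
        exact le_of_tendsto hlim hev
      have hres := inner_claim f (F n) ε (β₀ * α) U hUo happrox β₀ ⟨hx, hxU⟩
      rw [hβ' n] at hres
      exact hres
    | limit α hα ihl =>
      intro x hx
      rw [seqDeriv_limit' _ _ _ hα]
      have hlim : Order.IsSuccLimit (β₀ * α) := Ordinal.isSuccLimit_mul_right hβ₀pos hα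
      rw [oscDeriv_limit' _ _ _ hlim] at hx
      simp only [Set.mem_iInter] at hx ⊢
      intro c hc
      exact ihl c hc (hx (β₀ * c) (mul_lt_mul_of_pos_left hc hβ₀pos))
  exact emptyIndex_le_of_empty (Set.eq_empty_of_subset_empty ((main γ₀).trans hγ'.subset))
end

section
/- Let K be a compact metric space, F a closed subspace of K, and f a Baire class one function on F. For any ε > 0 there exists a continuous function g : K \ F^1(f,ε) → ℝ such that |g(x) − f(x)| ≤ ε for all x ∈ F \ F^1(f,ε). -/
open Filter Topology Set Ordinal

lemma oscDeriv_one {K : Type*} [TopologicalSpace K] (f : K → ℝ) (ε : ℝ) (F : Set K) :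
    oscDeriv f ε F 1 = oscStep f ε F := by
  unfold oscDeriv
  rw [← Ordinal.succ_zero, Ordinal.limitRecOn_succ, Ordinal.limitRecOn_zero]

theorem statement6 {K : Type*} [MetricSpace K] [CompactSpace K]
    (F : Set K) (hF : IsClosed F) (f : K → ℝ) (hf : BaireOneOn f F)
    (ε : ℝ) (hε : 0 < ε) :
    ∃ g : K → ℝ, ContinuousOn g (oscDeriv f ε F 1)ᶜ ∧
      ∀ x ∈ F \ oscDeriv f ε F 1, |g x - f x| ≤ ε := by
  classical
  simp only [oscDeriv_one]
  set D : Set K := (oscStep f ε F)ᶜ with hD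
  -- for each point of D, choose a good open neighborhood and a constant
  have key : ∀ z : D, ∃ V : Set K, ∃ c : ℝ, IsOpen V ∧ (z : K) ∈ V ∧
      ∀ x ∈ V ∩ F, |f x - c| ≤ ε := by
    rintro ⟨z, hz⟩
    by_cases hzF : z ∈ F
    · have hz' : z ∉ oscStep f ε F := hz
      simp only [oscStep, Set.mem_setOf_eq, not_and, not_forall] at hz'
      obtain ⟨U, hUo, hzU, hU⟩ := hz' hzF
      push_neg at hU
      refine ⟨U, f z, hUo, hzU, fun x hx => ?_⟩
      have := hU x hx z ⟨hzU, hzF⟩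
      linarith [this]
    · exact ⟨Fᶜ, 0, hF.isOpen_compl, hzF, fun x hx => absurd hx.2 hx.1⟩
  choose V c hVo hmem hVc using key
  -- a partition of unity on the subtype D subordinate to the pulled-back cover
  have hcover : (Set.univ : Set D) ⊆ ⋃ z : D, ((↑) : D → K) ⁻¹' V z :=
    fun x _ => Set.mem_iUnion.2 ⟨x, hmem x⟩
  obtain ⟨ρ, hρ⟩ := PartitionOfUnity.exists_isSubordinate (ι := D) (X := D)
    isClosed_univ (fun z => ((↑) : D → K) ⁻¹' V z)
    (fun z => (hVo z).preimage continuous_subtype_val) hcover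
  set g₀ : D → ℝ := fun x => ∑ᶠ z : D, ρ z x • c z with hg₀
  have hg₀c : Continuous g₀ :=
    ρ.continuous_finsum_smul fun i x _ => continuousAt_const
  refine ⟨fun x => if h : x ∈ D then g₀ ⟨x, h⟩ else 0, ?_, ?_⟩
  · rw [continuousOn_iff_continuous_restrict]
    have : D.restrict (fun x => if h : x ∈ D then g₀ ⟨x, h⟩ else 0) = g₀ := by
      funext x
      simp [Set.restrict, x.2]
    rw [show D.domRestrict _ = _ from this]
    exact hg₀c
  · rintro x ⟨hxF, hxD⟩
    have hxD' : x ∈ D := hxD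
    simp only [dif_pos hxD']
    set x' : D := ⟨x, hxD'⟩ with hx'
    have hsum1 : ∑ i ∈ ρ.finsupport x', ρ i x' = 1 :=
      ρ.sum_finsupport (Set.mem_univ x')
    have hfin : g₀ x' = ∑ i ∈ ρ.finsupport x', ρ i x' • c i := by
      rw [hg₀]
      exact (ρ.sum_finsupport_smul_eq_finsum (x₀ := x') (fun i _ => c i)).symm
    have hdiff : g₀ x' - f x = ∑ i ∈ ρ.finsupport x', ρ i x' * (c i - f x) := by
      rw [hfin]
      simp only [_root_.smul_eq_mul, _root_.mul_sub, Finset.sum_sub_distrib, ← Finset.sum_mul, hsum1, one_mul]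
    rw [hdiff]
    calc |∑ i ∈ ρ.finsupport x', ρ i x' * (c i - f x)|
        ≤ ∑ i ∈ ρ.finsupport x', |ρ i x' * (c i - f x)| := Finset.abs_sum_le_sum_abs _ _
      _ ≤ ∑ i ∈ ρ.finsupport x', ρ i x' * ε := by
          apply Finset.sum_le_sum
          intro i hi
          rw [abs_mul, abs_of_nonneg (ρ.nonneg i x')]
          apply mul_le_mul_of_nonneg_left _ (ρ.nonneg i x')
          have hne : x' ∈ Function.support ⇑(ρ i) := (ρ.mem_finsupport x').1 hi
          have hxV : x ∈ V i := hρ i (subset_tsupport _ hne)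
          have := hVc i x ⟨hxV, hxF⟩
          rwa [abs_sub_comm]
      _ = ε := by rw [← Finset.sum_mul, hsum1, one_mul]
end

section
/- Let K be a compact metric space, F a closed subspace, f a Baire class one function on F, β₀ a countable ordinal ≥ 1, and ε > 0. Then there exists g : K \ F^{β₀}(f,ε) → ℝ with ‖g − f‖_{F \ F^{β₀}(f,ε)} ≤ ε and β_H(g) ≤ β₀ for every compact subset H of K \ F^{β₀}(f,ε). -/
open Filter Topology Set Ordinal

section Aux

variable {K : Type*} [TopologicalSpace K] {f : K → ℝ} {ε : ℝ} {H : Set K}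

theorem myOscDeriv_zero : oscDeriv f ε H 0 = H :=
  Ordinal.limitRecOn_zero _ _ _

theorem myOscDeriv_succ (α : Ordinal) :
    oscDeriv f ε H (α + 1) = oscStep f ε (oscDeriv f ε H α) := by
  rw [Ordinal.add_one_eq_succ]
  exact Ordinal.limitRecOn_succ _ _ _ _

theorem myOscDeriv_limit {α : Ordinal} (h : Order.IsSuccLimit α) :
    oscDeriv f ε H α = ⋂ (β : Ordinal) (_ : β < α), oscDeriv f ε H β :=
  Ordinal.limitRecOn_limit _ _ _ _ h

theorem myOscStep_subset (f : K → ℝ) (ε : ℝ) (A : Set K) : oscStep f ε A ⊆ A :=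
  fun _ hx => hx.1

theorem myOscStep_mono {A B : Set K} (h : A ⊆ B) : oscStep f ε A ⊆ oscStep f ε B := by
  rintro x ⟨hxA, hx⟩
  refine ⟨h hxA, fun U hU hxU => ?_⟩
  obtain ⟨x₁, h₁, x₂, h₂, he⟩ := hx U hU hxU
  exact ⟨x₁, ⟨h₁.1, h h₁.2⟩, x₂, ⟨h₂.1, h h₂.2⟩, he⟩

theorem myIsClosed_oscStep {A : Set K} (hA : IsClosed A) : IsClosed (oscStep f ε A) := by
  refine isClosed_of_closure_subset fun x hx => ?_
  have hxA : x ∈ A := hA.closure_subset ((closure_mono (myOscStep_subset f ε A)) hx)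
  refine ⟨hxA, fun U hU hxU => ?_⟩
  obtain ⟨z, hzU, hz⟩ := mem_closure_iff.1 hx U hU hxU
  exact hz.2 U hU hzU

theorem myOscDeriv_antitone (f : K → ℝ) (ε : ℝ) (H : Set K) :
    ∀ β α, α ≤ β → oscDeriv f ε H β ⊆ oscDeriv f ε H α := by
  intro β
  induction β using Ordinal.induction with
  | _ β IH =>
    intro α hα
    rcases Ordinal.zero_or_succ_or_isSuccLimit β with hβ | ⟨b, hb⟩ | hβ
    · subst hβ; obtain rfl : α = 0 := le_antisymm hα (zero_le (a := α)); rfl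
    · subst hb
      rcases eq_or_lt_of_le hα with rfl | hlt
      · rfl
      · have hαb : α ≤ b := Order.lt_succ_iff.1 hlt
        have h2 : oscDeriv f ε H (Order.succ b) ⊆ oscDeriv f ε H b := by
          rw [← Ordinal.add_one_eq_succ, myOscDeriv_succ]
          exact myOscStep_subset _ _ _
        exact h2.trans (IH b (Order.lt_succ b) α hαb)
    · rcases eq_or_lt_of_le hα with rfl | hlt
      · rfl
      · rw [myOscDeriv_limit hβ]
        exact fun x hx => Set.mem_iInter₂.1 hx α hlt

theorem myIsClosed_oscDeriv (f : K → ℝ) (ε : ℝ) {H : Set K} (hH : IsClosed H) :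
    ∀ α, IsClosed (oscDeriv f ε H α) := by
  intro α
  induction α using Ordinal.induction with
  | _ α IH =>
    rcases Ordinal.zero_or_succ_or_isSuccLimit α with hα | ⟨b, hb⟩ | hα
    · subst hα; rw [myOscDeriv_zero]; exact hH
    · subst hb
      rw [← Ordinal.add_one_eq_succ, myOscDeriv_succ]
      exact myIsClosed_oscStep (IH b (Order.lt_succ b))
    · rw [myOscDeriv_limit hα]
      exact isClosed_iInter fun β => isClosed_iInter fun hβ => IH β hβ

end Aux

theorem statement7 {K : Type*} [MetricSpace K] [CompactSpace K]
    (F : Set K) (hF : IsClosed F) (f : K → ℝ) (hf : BaireOneOn f F)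
    (β₀ : Ordinal) (hβ₀1 : 1 ≤ β₀) (hβ₀ : β₀ < (Cardinal.aleph 1).ord)
    (ε : ℝ) (hε : 0 < ε) :
    ∃ g : K → ℝ, (∀ x ∈ F \ oscDeriv f ε F β₀, |g x - f x| ≤ ε) ∧
      ∀ H : Set K, IsCompact H → H ⊆ (oscDeriv f ε F β₀)ᶜ → betaOn g H ≤ β₀ := by
  classical
  have hβ0 : β₀ ≠ 0 := by
    intro h; rw [h] at hβ₀1; simp at hβ₀1
  set E : Ordinal → Set K := fun α => if α = 0 then Set.univ else oscDeriv f ε F α with hE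
  have hE0 : E 0 = Set.univ := if_pos rfl
  have hEne : ∀ {α : Ordinal}, α ≠ 0 → E α = oscDeriv f ε F α := fun h => if_neg h
  have hEmono : ∀ {a b : Ordinal}, a ≤ b → E b ⊆ E a := by
    intro a b hab
    rcases eq_or_ne a 0 with rfl | ha
    · rw [hE0]; exact Set.subset_univ _
    · have hb : b ≠ 0 := fun h => ha (le_antisymm (h ▸ hab) (zero_le (a := a)))
      rw [hEne ha, hEne hb]; exact myOscDeriv_antitone f ε F b a hab
  have hEclosed : ∀ α, IsClosed (E α) := by
    intro α; rcases eq_or_ne α 0 with rfl | h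
    · rw [hE0]; exact isClosed_univ
    · rw [hEne h]; exact myIsClosed_oscDeriv f ε hF α
  set C : Ordinal → Set K := fun α => if α = 0 then F else oscDeriv f ε F α with hC
  have hC0 : C 0 = F := if_pos rfl
  have hCne : ∀ {α : Ordinal}, α ≠ 0 → C α = oscDeriv f ε F α := fun h => if_neg h
  have hCclosed : ∀ α, IsClosed (C α) := by
    intro α; rcases eq_or_ne α 0 with rfl | h
    · rw [hC0]; exact hF
    · rw [hCne h]; exact myIsClosed_oscDeriv f ε hF α
  have hEsucc : ∀ α, E (α + 1) = oscStep f ε (C α) := by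
    intro α
    have h1 : (α + 1 : Ordinal) ≠ 0 := by
      rw [Ordinal.add_one_eq_succ]; exact (Order.succ_ne_bot α)
    rw [hEne h1, myOscDeriv_succ]
    rcases eq_or_ne α 0 with rfl | h
    · rw [myOscDeriv_zero, hC0]
    · rw [hCne h]
  have hElim : ∀ {l : Ordinal}, Order.IsSuccLimit l → ∀ x : K, (∀ b < l, x ∈ E b) → x ∈ E l := by
    intro l hl x hx
    rw [hEne hl.pos.ne', myOscDeriv_limit hl]
    refine Set.mem_iInter₂.2 fun b hb => ?_
    rcases eq_or_ne b 0 with rfl | hb0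
    · have h1 : x ∈ E 1 := hx 1 (Ordinal.one_lt_of_isSuccLimit hl)
      rw [hEne one_ne_zero] at h1
      rw [myOscDeriv_zero]
      have h2 := myOscDeriv_antitone f ε F 1 0 (zero_le (a := (1 : Ordinal)))
      rw [myOscDeriv_zero] at h2
      exact h2 h1
    · have := hx b hb; rwa [hEne hb0] at this
  -- continuous approximations on each stratum
  have hstrat : ∀ α : Ordinal, ∃ g : ↥(E α \ E (α + 1)) → ℝ, Continuous g ∧
      ∀ x : ↥(E α \ E (α + 1)), (x : K) ∈ F → |g x - f (x : K)| ≤ ε := by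
    intro α
    have hnbhd : ∀ y : ↥(E α \ E (α + 1)), ∃ V : Set K, IsOpen V ∧ (y : K) ∈ V ∧
        ∀ z ∈ V ∩ C α, (y : K) ∈ C α ∧ |f (y : K) - f z| < ε := by
      intro y
      have hy2 : (y : K) ∉ oscStep f ε (C α) := fun hc => y.2.2 ((hEsucc α).superset hc)
      by_cases hyC : (y : K) ∈ C α
      · have hns : ¬ ∀ U : Set K, IsOpen U → (y : K) ∈ U →
            ∃ x₁ ∈ U ∩ C α, ∃ x₂ ∈ U ∩ C α, ε ≤ |f x₁ - f x₂| := fun h => hy2 ⟨hyC, h⟩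
        push_neg at hns
        obtain ⟨U, hUo, hyU, hU⟩ := hns
        exact ⟨U, hUo, hyU, fun z hz => ⟨hyC, hU (y : K) ⟨hyU, hyC⟩ z hz⟩⟩
      · exact ⟨(C α)ᶜ, (hCclosed α).isOpen_compl, hyC,
          fun z hz => absurd hz.2 hz.1⟩
    choose V hVo hVmem hVctl using hnbhd
    have hmain := exists_continuous_forall_mem_convex_of_local
      (X := ↥(E α \ E (α + 1))) (E := ℝ)
      (t := fun x => if (x : K) ∈ F then Metric.closedBall (f (x : K)) ε else Set.univ)
      (fun x => by split_ifs; exacts [convex_closedBall _ _, convex_univ])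
      (fun x => by
        refine ⟨Subtype.val ⁻¹' V x, ((hVo x).preimage continuous_subtype_val).mem_nhds (hVmem x),
          fun _ => f (x : K), continuousOn_const, fun y hy => ?_⟩
        show f (x : K) ∈ if (y : K) ∈ F then Metric.closedBall (f (y : K)) ε else Set.univ
        by_cases hyF : (y : K) ∈ F
        · rw [if_pos hyF, Metric.mem_closedBall, Real.dist_eq]
          have hyC : (y : K) ∈ C α := by
            rcases eq_or_ne α 0 with rfl | h
            · rw [hC0]; exact hyF
            · rw [hCne h]; exact (hEne h).subset y.2.1
          exact le_of_lt (hVctl x (y : K) ⟨hy, hyC⟩).2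
        · rw [if_neg hyF]; trivial)
    obtain ⟨g, hg⟩ := hmain
    refine ⟨g, g.continuous, fun x hxF => ?_⟩
    have h3 : g x ∈ if (x : K) ∈ F then Metric.closedBall (f (x : K)) ε else Set.univ := hg x
    rwa [if_pos hxF, Metric.mem_closedBall, Real.dist_eq] at h3
  choose gs hgsc hgsa using hstrat
  let rnk : K → Ordinal := fun x => sInf {α | x ∉ E (α + 1)}
  let g : K → ℝ := fun x =>
    if h : x ∈ E (rnk x) \ E (rnk x + 1) then gs (rnk x) ⟨x, h⟩ else 0
  have hrnk : ∀ (α : Ordinal) (x : K), x ∈ E α \ E (α + 1) → rnk x = α := by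
    intro α x hx
    refine le_antisymm (csInf_le' hx.2) (le_csInf ⟨α, hx.2⟩ fun b hb => ?_)
    by_contra hlt
    push_neg at hlt
    have hsub : E α ⊆ E (b + 1) :=
      hEmono (by rw [Ordinal.add_one_eq_succ]; exact Order.succ_le_of_lt hlt)
    exact hb (hsub hx.1)
  have hgval : ∀ (α : Ordinal) (x : K) (hx : x ∈ E α \ E (α + 1)), g x = gs α ⟨x, hx⟩ := by
    intro α x hx
    have h1 : rnk x = α := hrnk α x hx
    subst h1
    show (if h : x ∈ E (rnk x) \ E (rnk x + 1) then gs (rnk x) ⟨x, h⟩ else 0) = _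
    rw [dif_pos hx]
  have hstratex : ∀ x : K, x ∉ E β₀ → ∃ α, x ∈ E α \ E (α + 1) := by
    intro x hx
    have hne : {γ : Ordinal | x ∉ E γ}.Nonempty := ⟨β₀, hx⟩
    have hμmem : x ∉ E (sInf {γ : Ordinal | x ∉ E γ}) := csInf_mem hne
    set μ := sInf {γ : Ordinal | x ∉ E γ} with hμ
    have hμmin : ∀ b < μ, x ∈ E b := by
      intro b hb
      by_contra hbx
      exact absurd (csInf_le' (s := {γ : Ordinal | x ∉ E γ}) hbx) (not_le.2 hb)
    rcases Ordinal.zero_or_succ_or_isSuccLimit μ with h0 | ⟨a, ha⟩ | hl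
    · rw [h0, hE0] at hμmem; exact absurd (Set.mem_univ x) hμmem
    · refine ⟨a, hμmin a (by rw [← ha]; exact Order.lt_succ a), ?_⟩
      rw [Ordinal.add_one_eq_succ, ha]; exact hμmem
    · exact absurd (hElim hl x hμmin) hμmem
  have hEβ₀ : E β₀ = oscDeriv f ε F β₀ := hEne hβ0
  refine ⟨g, ?_, ?_⟩
  · rintro x ⟨hxF, hxD⟩
    have hx : x ∉ E β₀ := by rw [hEβ₀]; exact hxD
    obtain ⟨α, hα⟩ := hstratex x hx
    rw [hgval α x hα]
    exact hgsa α ⟨x, hα⟩ hxF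
  · intro H hHc hHD
    have key : ∀ ε' : ℝ, 0 < ε' → oscDeriv g ε' H β₀ = ∅ := by
      intro ε' hε'
      have claim : ∀ α, oscDeriv g ε' H α ⊆ E α ∩ H := by
        intro α
        induction α using Ordinal.induction with
        | _ α IH =>
          rcases Ordinal.zero_or_succ_or_isSuccLimit α with h0 | ⟨b, hb⟩ | hl
          · subst h0; rw [myOscDeriv_zero, hE0]
            exact fun x hx => ⟨Set.mem_univ x, hx⟩
          · subst hb
            rw [← Ordinal.add_one_eq_succ, myOscDeriv_succ]
            intro x hx
            have hxprev : x ∈ E b ∩ H := IH b (Order.lt_succ b) (myOscStep_subset _ _ _ hx)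
            refine ⟨?_, hxprev.2⟩
            by_contra hxnot
            have hxS : x ∈ E b \ E (b + 1) := ⟨hxprev.1, hxnot⟩
            have hc : ContinuousAt (gs b) ⟨x, hxS⟩ := (hgsc b).continuousAt
            have hball : (gs b) ⁻¹' (Metric.ball (gs b ⟨x, hxS⟩) (ε' / 2)) ∈
                𝓝 (⟨x, hxS⟩ : ↥(E b \ E (b + 1))) :=
              hc (Metric.ball_mem_nhds _ (by linarith))
            rw [mem_nhds_subtype] at hball
            obtain ⟨W₁, hW₁, hW₁sub⟩ := hball
            obtain ⟨W₂, hW₂sub, hW₂o, hxW₂⟩ := mem_nhds_iff.1 hW₁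
            have hWo : IsOpen (W₂ ∩ (E (b + 1))ᶜ) := hW₂o.inter (hEclosed (b + 1)).isOpen_compl
            have hxW : x ∈ W₂ ∩ (E (b + 1))ᶜ := ⟨hxW₂, hxnot⟩
            obtain ⟨x₁, hx₁, x₂, hx₂, hdist⟩ := hx.2 _ hWo hxW
            have h₁S : x₁ ∈ E b \ E (b + 1) := ⟨(IH b (Order.lt_succ b) hx₁.2).1, hx₁.1.2⟩
            have h₂S : x₂ ∈ E b \ E (b + 1) := ⟨(IH b (Order.lt_succ b) hx₂.2).1, hx₂.1.2⟩
            have d₁ : |gs b ⟨x₁, h₁S⟩ - gs b ⟨x, hxS⟩| < ε' / 2 := by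
              have hm : (⟨x₁, h₁S⟩ : ↥(E b \ E (b + 1))) ∈ Subtype.val ⁻¹' W₁ :=
                hW₂sub hx₁.1.1
              have := hW₁sub hm
              rwa [Set.mem_preimage, Metric.mem_ball, Real.dist_eq] at this
            have d₂ : |gs b ⟨x₂, h₂S⟩ - gs b ⟨x, hxS⟩| < ε' / 2 := by
              have hm : (⟨x₂, h₂S⟩ : ↥(E b \ E (b + 1))) ∈ Subtype.val ⁻¹' W₁ :=
                hW₂sub hx₂.1.1
              have := hW₁sub hm
              rwa [Set.mem_preimage, Metric.mem_ball, Real.dist_eq] at this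
            have hlt : |g x₁ - g x₂| < ε' := by
              rw [hgval b x₁ h₁S, hgval b x₂ h₂S]
              calc |gs b ⟨x₁, h₁S⟩ - gs b ⟨x₂, h₂S⟩|
                  ≤ |gs b ⟨x₁, h₁S⟩ - gs b ⟨x, hxS⟩| + |gs b ⟨x, hxS⟩ - gs b ⟨x₂, h₂S⟩| :=
                    abs_sub_le _ _ _
                _ < ε' / 2 + ε' / 2 := by
                    rw [abs_sub_comm (gs b ⟨x, hxS⟩)]
                    exact add_lt_add d₁ d₂
                _ = ε' := by ring
            exact absurd hdist (not_le.2 hlt)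
          · rw [myOscDeriv_limit hl]
            intro x hx
            have hmem : ∀ b < α, x ∈ E b ∩ H := fun b hb =>
              IH b hb (Set.mem_iInter₂.1 hx b hb)
            exact ⟨hElim hl x (fun b hb => (hmem b hb).1), (hmem 0 hl.pos).2⟩
      rw [Set.eq_empty_iff_forall_notMem]
      intro x hx
      have h2 := claim β₀ hx
      exact hHD h2.2 (by rw [← hEβ₀]; exact h2.1)
    unfold betaOn
    refine ciSup_le' ?_
    rintro ⟨e, he⟩
    unfold betaEpsOn emptyIndex
    rw [dif_pos ⟨β₀, key e he⟩]
    exact csInf_le' (key e he)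
end

section
/- Let K be a compact metric space and f a Baire class one function on K. Suppose 𝓗 is a countable collection of compact subsets of K with ⋃𝓗 = K and sup_{x∈H}|f(x)| < ∞ for each H ∈ 𝓗. Then there exists a sequence (fₙ) of continuous real-valued functions on K converging pointwise to f such that for every H ∈ 𝓗 the sequence of restrictions (fₙ|_H) is uniformly bounded. -/
open Filter Topology Set Ordinal

theorem statement15 {K : Type*} [MetricSpace K] [CompactSpace K]
    (f : K → ℝ) (hf : BaireOne f) (𝓗 : Set (Set K)) (hctble : 𝓗.Countable)
    (hcomp : ∀ H ∈ 𝓗, IsCompact H) (hcover : ⋃₀ 𝓗 = Set.univ)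
    (hbd : ∀ H ∈ 𝓗, ∃ M : ℝ, ∀ x ∈ H, |f x| ≤ M) :
    ∃ F : ℕ → K → ℝ, (∀ n, Continuous (F n)) ∧
      (∀ x, Tendsto (fun n => F n x) atTop (nhds (f x))) ∧
      ∀ H ∈ 𝓗, ∃ M : ℝ, ∀ n, ∀ x ∈ H, |F n x| ≤ M := by
  classical
  obtain ⟨g, hgc, hgl⟩ := hf
  rcases 𝓗.eq_empty_or_nonempty with h𝓗 | h𝓗
  · exact ⟨g, hgc, hgl, by simp [h𝓗]⟩
  obtain ⟨e, he⟩ := Set.Countable.exists_eq_range hctble h𝓗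
  have hmem : ∀ k, e k ∈ 𝓗 := fun k => he ▸ Set.mem_range_self k
  choose M0 hM0 using fun k => hbd (e k) (hmem k)
  set M' : ℕ → ℝ := fun k => ∑ i ∈ Finset.range (k + 1), max (M0 i) 0 with hM'def
  have hM'nonneg : ∀ k, 0 ≤ M' k := fun k =>
    Finset.sum_nonneg fun i _ => le_max_right _ _
  have hM'mono : Monotone M' := by
    intro a b hab
    apply Finset.sum_le_sum_of_subset_of_nonneg
    · exact Finset.range_subset_range.2 (by omega)
    · intro i _ _; exact le_max_right _ _
  have hM'ge : ∀ k, M0 k ≤ M' k := fun k =>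
    le_trans (le_max_left _ _)
      (Finset.single_le_sum (f := fun i => max (M0 i) 0)
        (fun i _ => le_max_right _ _) (Finset.self_mem_range_succ k))
  set D : ℕ → K → ℝ := fun k x => if (e k).Nonempty then Metric.infDist x (e k) else 1
    with hDdef
  have hDcont : ∀ k, Continuous (D k) := by
    intro k
    by_cases h : (e k).Nonempty <;> simp only [hDdef, h, if_true, if_false]
    · exact Metric.continuous_infDist_pt _
    · exact continuous_const
  have hDnonneg : ∀ k x, 0 ≤ D k x := by
    intro k x
    by_cases h : (e k).Nonempty <;> simp only [hDdef, h, if_true, if_false]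
    · exact Metric.infDist_nonneg
    · norm_num
  have hDzero : ∀ k x, x ∈ e k → D k x = 0 := by
    intro k x hx
    have hne : (e k).Nonempty := ⟨x, hx⟩
    simp only [hDdef, if_pos hne]
    exact Metric.infDist_zero_of_mem hx
  have hDpos : ∀ k x, x ∉ e k → 0 < D k x := by
    intro k x hx
    by_cases h : (e k).Nonempty <;> simp only [hDdef, h, if_true, if_false]
    · exact ((hcomp (e k) (hmem k)).isClosed.notMem_iff_infDist_pos h).1 hx
    · norm_num
  have hrne : ∀ n : ℕ, (Finset.range (n + 1)).Nonempty := fun n => ⟨0, by simp⟩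
  set c : ℕ → K → ℝ := fun n x =>
    (Finset.range (n + 1)).inf' (hrne n) (fun k => M' k + n * D k x) with hcdef
  have hccont : ∀ n, Continuous (c n) := by
    intro n
    rw [continuous_iff_continuousAt]
    intro x
    exact ContinuousAt.finset_inf'_apply (hrne n) fun i _ =>
      (continuous_const.add (continuous_const.mul (hDcont i))).continuousAt
  have hcnonneg : ∀ n x, 0 ≤ c n x := by
    intro n x
    apply Finset.le_inf'
    intro k _
    have := hDnonneg k x
    have := hM'nonneg k
    positivity
  have hcle : ∀ n k, k ≤ n → ∀ x, c n x ≤ M' k + n * D k x := by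
    intro n k hk x
    exact Finset.inf'_le _ (Finset.mem_range.2 (by omega))
  set F : ℕ → K → ℝ := fun n x => max (-(c n x)) (min (c n x) (g n x)) with hFdef
  have hFcont : ∀ n, Continuous (F n) :=
    fun n => ((hccont n).neg).max ((hccont n).min (hgc n))
  have hFabs : ∀ n x, |F n x| ≤ c n x := by
    intro n x
    rw [abs_le]
    constructor
    · exact le_max_left _ _
    · exact max_le (by linarith [hcnonneg n x]) (min_le_left _ _)
  have hcbd : ∀ n, ∃ B : ℝ, ∀ x : K, c n x ≤ B := by
    intro n
    rcases isEmpty_or_nonempty K with h | h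
    · exact ⟨0, fun x => (h.false x).elim⟩
    · obtain ⟨x₀, -, hx₀⟩ := isCompact_univ.exists_isMaxOn Set.univ_nonempty
        ((hccont n).continuousOn)
      exact ⟨c n x₀, fun x => hx₀ (Set.mem_univ x)⟩
  choose B hB using hcbd
  refine ⟨F, hFcont, ?_, ?_⟩
  · -- pointwise convergence
    intro x
    have hex : ∃ k, x ∈ e k := by
      have hx : x ∈ ⋃₀ 𝓗 := hcover ▸ Set.mem_univ x
      obtain ⟨t, ht, hxt⟩ := hx
      obtain ⟨k, rfl⟩ := he ▸ ht
      exact ⟨k, hxt⟩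
    set k₀ := Nat.find hex with hk₀def
    have hk₀ : x ∈ e k₀ := Nat.find_spec hex
    have hlt : ∀ k < k₀, x ∉ e k := fun k hk => Nat.find_min hex hk
    have hupper : ∀ n, k₀ ≤ n → c n x ≤ M' k₀ := by
      intro n hn
      have := hcle n k₀ hn x
      rw [hDzero k₀ x hk₀] at this
      linarith
    have hNk : ∀ k < k₀, ∃ N : ℕ, ∀ n : ℕ, N ≤ n → M' k₀ ≤ M' k + n * D k x := by
      intro k hk
      have hd := hDpos k x (hlt k hk)
      refine ⟨⌈M' k₀ / D k x⌉₊, fun n hn => ?_⟩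
      have h1 : M' k₀ / D k x ≤ (n : ℝ) := (Nat.ceil_le.1 hn).trans (by norm_num)
      have h2 : M' k₀ ≤ n * D k x := by
        rw [div_le_iff₀ hd] at h1
        linarith
      linarith [hM'nonneg k]
    choose! N hN using hNk
    set N₀ := max k₀ ((Finset.range k₀).sup N) with hN₀def
    have hconst : ∀ n, N₀ ≤ n → c n x = M' k₀ := by
      intro n hn
      have hn1 : k₀ ≤ n := le_trans (le_max_left _ _) hn
      refine le_antisymm (hupper n hn1) ?_
      apply Finset.le_inf'
      intro k hkmem
      rcases lt_or_ge k k₀ with hk | hk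
      · have hNk' : N k ≤ n :=
          le_trans (Finset.le_sup (Finset.mem_range.2 hk)) (le_trans (le_max_right _ _) hn)
        exact hN k hk n hNk'
      · have := hM'mono hk
        have := hDnonneg k x
        have : (0:ℝ) ≤ (n:ℝ) * D k x := by positivity
        linarith [hM'mono hk]
    have hctend : Tendsto (fun n => c n x) atTop (nhds (M' k₀)) := by
      apply Tendsto.congr' _ tendsto_const_nhds
      filter_upwards [eventually_ge_atTop N₀] with n hn
      exact (hconst n hn).symm
    have hfle : |f x| ≤ M' k₀ := le_trans (hM0 k₀ x hk₀) (hM'ge k₀)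
    have : Tendsto (fun n => F n x) atTop
        (nhds (max (-(M' k₀)) (min (M' k₀) (f x)))) :=
      (hctend.neg).max (hctend.min (hgl x))
    rwa [min_eq_right (abs_le.1 hfle).2, max_eq_right (abs_le.1 hfle).1] at this
  · -- uniform boundedness on each H
    intro H hH
    obtain ⟨j, rfl⟩ := he ▸ hH
    refine ⟨M' j + ∑ n ∈ Finset.range j, max (B n) 0, fun n x hx => ?_⟩
    have hsum_nonneg : (0:ℝ) ≤ ∑ n ∈ Finset.range j, max (B n) 0 :=
      Finset.sum_nonneg fun i _ => le_max_right _ _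
    refine le_trans (hFabs n x) ?_
    rcases le_or_gt j n with hjn | hjn
    · have := hcle n j hjn x
      rw [hDzero j x hx] at this
      linarith
    · have h1 : c n x ≤ B n := hB n x
      have h2 : max (B n) 0 ≤ ∑ i ∈ Finset.range j, max (B i) 0 :=
        Finset.single_le_sum (f := fun i => max (B i) 0)
          (fun i _ => le_max_right _ _) (Finset.mem_range.2 hjn)
      linarith [le_max_left (B n) 0, hM'nonneg j]
end
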